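/- Let K be a field of characteristic zero, d ≥ 2 an integer, and a₁, ..., a_d ∈ K algebraically independent over the prime field ℚ of K. Then the polynomial P(z) = a₁z + a₂z² + ... + a_d z^d has no parabolic periodic point: there is no z₀ ∈ K and n ≥ 1 with P^n(z₀) = z₀ and (P^n)'(z₀) a root of unity. -/

import Mathlib

/-!
Let `B = ℚ[x₁, …, x_d][1/x_d]` and let `P = x₁z + ⋯ + x_d z^d` be the generic polynomial over `B`.
Algebraic independence makes `xᵢ ↦ aᵢ` an embedding `B ↪ K`. The leading coefficient of
`P^n(z) - z` is a power of `x_d`, a unit of `B`, so every periodic point `z₀ ∈ K` is integral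
over `B`. By lying over, the specialization `B → ℚ`, `(x₁, …, x_d) ↦ (0, …, 0, 1)`, which turns
`P` into `z^d`, extends to `B[z₀]` with values in a field of characteristic zero, and it carries
a parabolic periodic point `z₀` of `P` to one of `z^d`. But a point `w` with `w^(d^n) = w` and
`d^n w^(d^n - 1)` a root of unity has `w^(d^n - 1) = 1`, so `d^n` would be a root of unity.
-/

/-- `n`-th iterate of a polynomial under composition. -/
noncomputable def polyIt {K : Type*} [CommRing K] (P : Polynomial K) : ℕ → Polynomial K
  | 0 => Polynomial.X
  | n + 1 => P.comp (polyIt P n)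

open Polynomial

section Iterate

variable {R : Type*} [CommRing R]

lemma polyIt_map {S : Type*} [CommRing S] (f : R →+* S) (P : R[X]) :
    ∀ n, (polyIt P n).map f = polyIt (P.map f) n
  | 0 => by simp [polyIt]
  | n + 1 => by rw [polyIt, Polynomial.map_comp, polyIt_map f P n]; rfl

lemma polyIt_X_pow (N : ℕ) : ∀ n, polyIt (X ^ N : R[X]) n = X ^ (N ^ n)
  | 0 => by simp [polyIt]
  | n + 1 => by rw [polyIt, polyIt_X_pow N n, X_pow_comp, ← pow_mul, ← pow_succ]

variable [IsDomain R]

lemma natDegree_polyIt (P : R[X]) : ∀ n, (polyIt P n).natDegree = P.natDegree ^ n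
  | 0 => by simp [polyIt]
  | n + 1 => by rw [polyIt, natDegree_comp, natDegree_polyIt P n, pow_succ']

lemma isUnit_leadingCoeff_polyIt {P : R[X]} (hP : P.natDegree ≠ 0)
    (hlc : IsUnit P.leadingCoeff) : ∀ n, IsUnit (polyIt P n).leadingCoeff
  | 0 => by simp [polyIt]
  | n + 1 => by
      rw [polyIt, leadingCoeff_comp (by rw [natDegree_polyIt]; exact pow_ne_zero n hP)]
      exact hlc.mul ((isUnit_leadingCoeff_polyIt hP hlc n).pow _)

end Iterate

def IsParabolicPeriodicPt {R : Type*} [CommRing R] (P : R[X]) (z : R) : Prop :=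
  ∃ n : ℕ, 1 ≤ n ∧ (polyIt P n).eval z = z ∧
    ∃ m : ℕ, 1 ≤ m ∧ ((polyIt P n).derivative.eval z) ^ m = 1

lemma not_isParabolicPeriodicPt_X_pow {L : Type*} [CommRing L] [IsDomain L] [CharZero L]
    {N : ℕ} (hN : 2 ≤ N) (w : L) : ¬ IsParabolicPeriodicPt (X ^ N) w := by
  rintro ⟨n, hn, hfix, m, hm, hmul⟩
  rw [polyIt_X_pow] at hfix hmul
  set M := N ^ n
  have hM : 2 ≤ M := hN.trans (Nat.le_self_pow (by omega) N)
  simp only [eval_pow, eval_X, derivative_X_pow, eval_mul, eval_C] at hfix hmul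
  have hw : w ≠ 0 := by
    rintro rfl
    rw [zero_pow (by omega), mul_zero, zero_pow (by omega)] at hmul
    exact zero_ne_one hmul
  have hroot : w ^ (M - 1) = 1 :=
    mul_right_cancel₀ hw (by rw [← pow_succ, Nat.sub_add_cancel (by omega), hfix, one_mul])
  rw [hroot, mul_one] at hmul
  have : M ^ m = 1 := by exact_mod_cast hmul
  rw [Nat.pow_eq_one] at this
  omega

lemma IsParabolicPeriodicPt.specialize {R S L : Type*} [CommRing R] [CommRing S] [Algebra R S]
    [CommRing L] {P : R[X]} {z : S} {f : R →+* L} {w : L}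
    (hw : ∀ Q : R[X], aeval z Q = 0 → eval₂ f w Q = 0)
    (h : IsParabolicPeriodicPt (P.map (algebraMap R S)) z) :
    IsParabolicPeriodicPt (P.map f) w := by
  have hw' : ∀ Q : R[X], (Q.map (algebraMap R S)).eval z = 0 → (Q.map f).eval w = 0 := by
    simpa only [aeval_def, eval₂_eq_eval_map] using hw
  obtain ⟨n, hn, hfix, m, hm, hmul⟩ := h
  refine ⟨n, hn, ?_, m, hm, ?_⟩
  · have := hw' (polyIt P n - X) (by
      rw [Polynomial.map_sub, polyIt_map, map_X, eval_sub, eval_X, hfix, sub_self])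
    rwa [Polynomial.map_sub, polyIt_map, map_X, eval_sub, eval_X, sub_eq_zero] at this
  · have := hw' ((polyIt P n).derivative ^ m - 1) (by
      rw [Polynomial.map_sub, Polynomial.map_pow, Polynomial.map_one, ← derivative_map,
        polyIt_map, eval_sub, eval_pow, eval_one, hmul, sub_self])
    rwa [Polynomial.map_sub, Polynomial.map_pow, Polynomial.map_one, ← derivative_map,
      polyIt_map, eval_sub, eval_pow, eval_one, sub_eq_zero] at this

lemma isIntegral_of_isUnit_leadingCoeff {R S : Type*} [CommRing R] [CommRing S] [Algebra R S]
    {p : R[X]} (hp : IsUnit p.leadingCoeff) {z : S} (hz : aeval z p = 0) : IsIntegral R z :=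
  ⟨_, monic_of_isUnit_leadingCoeff_inv_smul hp, by
    rw [← aeval_def, Units.smul_def, map_smul, hz, smul_zero]⟩

lemma isIntegral_of_eval_polyIt_eq_self {R S : Type*} [CommRing R] [IsDomain R] [CommRing S]
    [Algebra R S] {P : R[X]} (hP : 2 ≤ P.natDegree) (hlc : IsUnit P.leadingCoeff) {n : ℕ}
    (hn : 1 ≤ n) {z : S} (hz : (polyIt (P.map (algebraMap R S)) n).eval z = z) :
    IsIntegral R z := by
  have hdeg : (X : R[X]).degree < (polyIt P n).degree := by
    have : 2 ≤ (polyIt P n).natDegree := by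
      rw [natDegree_polyIt]; exact hP.trans (Nat.le_self_pow (by omega) _)
    rw [degree_X, degree_eq_natDegree (ne_zero_of_natDegree_gt this)]
    exact_mod_cast this
  refine isIntegral_of_isUnit_leadingCoeff (p := polyIt P n - X) ?_ ?_
  · rw [leadingCoeff_sub_of_degree_lt hdeg]
    exact isUnit_leadingCoeff_polyIt (by omega) hlc n
  · rw [aeval_def, eval₂_eq_eval_map, Polynomial.map_sub, polyIt_map, map_X, eval_sub, eval_X,
      hz, sub_self]

universe v

theorem exists_field_eval₂_eq_zero_of_isIntegral {k R : Type*} {S : Type v} [Field k]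
    [CommRing R] [Algebra k R] [CommRing S] [Algebra R S]
    (hRS : Function.Injective (algebraMap R S))
    (φ : R →ₐ[k] k) {z : S} (hz : IsIntegral R z) :
    ∃ (L : Type v) (_ : Field L) (g : k →+* L) (w : L),
      ∀ Q : R[X], aeval z Q = 0 → eval₂ (g.comp φ) w Q = 0 := by
  let A := integralClosure R S
  have hφ : Function.Surjective φ := fun c => ⟨algebraMap k R c, φ.commutes c⟩
  have := RingHom.ker_isMaximal_of_surjective φ hφ
  obtain ⟨q, hq, hqφ⟩ :=
    Ideal.exists_ideal_over_maximal_of_isIntegral (S := A) (RingHom.ker φ) fun r hr => by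
      have : algebraMap R S r = 0 := congrArg Subtype.val hr
      rw [RingHom.mem_ker, hRS (this.trans (map_zero _).symm), map_zero]
  let := Ideal.Quotient.field q
  let π : R →+* A ⧸ q := (Ideal.Quotient.mk q).comp (algebraMap R A)
  have hπ : ∀ r, π (algebraMap k R (φ r)) = π r := fun r => by
    rw [← sub_eq_zero, ← map_sub]
    change Ideal.Quotient.mk q (algebraMap R A _) = 0
    rw [Ideal.Quotient.eq_zero_iff_mem, ← Ideal.mem_comap, hqφ, RingHom.mem_ker]
    simp
  let zA : A := ⟨z, hz⟩
  refine ⟨A ⧸ q, inferInstance, π.comp (algebraMap k R), Ideal.Quotient.mk q zA,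
    fun Q hQ => ?_⟩
  have hQA : aeval zA Q = 0 := Subtype.val_injective (by
    rw [← Subalgebra.val_apply, ← aeval_algHom_apply]; exact hQ)
  rw [show (π.comp (algebraMap k R)).comp φ = π from RingHom.ext hπ, ← hom_eval₂,
    ← aeval_def, hQA, map_zero]

section Coeffs

variable {R : Type*} [CommRing R]

noncomputable def polyOfCoeffs {d : ℕ} (b : Fin d → R) : R[X] :=
  ∑ i : Fin d, C (b i) * X ^ ((i : ℕ) + 1)

lemma polyOfCoeffs_map {S : Type*} [CommRing S] (f : R →+* S) {d : ℕ} (b : Fin d → R) :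
    (polyOfCoeffs b).map f = polyOfCoeffs (f ∘ b) := by
  simp [polyOfCoeffs, Polynomial.map_sum]

lemma polyOfCoeffs_single {d : ℕ} (i : Fin d) :
    polyOfCoeffs (Pi.single i 1 : Fin d → R) = X ^ ((i : ℕ) + 1) := by
  simp [polyOfCoeffs, Pi.single_apply]

lemma polyOfCoeffs_castSucc {k : ℕ} (b : Fin (k + 1) → R) :
    polyOfCoeffs b = polyOfCoeffs (b ∘ Fin.castSucc) + C (b (Fin.last k)) * X ^ (k + 1) := by
  simp [polyOfCoeffs, Fin.sum_univ_castSucc]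

lemma natDegree_polyOfCoeffs_le {d : ℕ} (b : Fin d → R) : (polyOfCoeffs b).natDegree ≤ d :=
  natDegree_sum_le_of_forall_le _ _ fun i _ => (natDegree_C_mul_X_pow_le _ _).trans i.isLt

lemma degree_polyOfCoeffs_castSucc_lt {k : ℕ} {b : Fin (k + 1) → R}
    (hb : b (Fin.last k) ≠ 0) :
    (polyOfCoeffs (b ∘ Fin.castSucc)).degree < (C (b (Fin.last k)) * X ^ (k + 1)).degree := by
  rw [degree_C_mul_X_pow _ hb]
  exact (degree_le_of_natDegree_le (natDegree_polyOfCoeffs_le _)).trans_lt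
    (by exact_mod_cast k.lt_succ_self)

lemma natDegree_polyOfCoeffs {k : ℕ} {b : Fin (k + 1) → R} (hb : b (Fin.last k) ≠ 0) :
    (polyOfCoeffs b).natDegree = k + 1 := by
  rw [polyOfCoeffs_castSucc,
    natDegree_add_eq_right_of_degree_lt (degree_polyOfCoeffs_castSucc_lt hb),
    natDegree_C_mul_X_pow _ _ hb]

lemma leadingCoeff_polyOfCoeffs {k : ℕ} {b : Fin (k + 1) → R} (hb : b (Fin.last k) ≠ 0) :
    (polyOfCoeffs b).leadingCoeff = b (Fin.last k) := by
  rw [polyOfCoeffs_castSucc, leadingCoeff_add_of_degree_lt (degree_polyOfCoeffs_castSucc_lt hb),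
    leadingCoeff_C_mul_X_pow]

end Coeffs

section Generic

variable (k : ℕ)

abbrev GenericCoeffRing : Type :=
  Localization.Away (MvPolynomial.X (Fin.last k) : MvPolynomial (Fin (k + 1)) ℚ)

noncomputable def genericPoly : (GenericCoeffRing k)[X] :=
  polyOfCoeffs fun i => algebraMap (MvPolynomial (Fin (k + 1)) ℚ) _ (MvPolynomial.X i)

lemma powers_X_last_le_nonZeroDivisors :
    Submonoid.powers (MvPolynomial.X (Fin.last k) : MvPolynomial (Fin (k + 1)) ℚ) ≤
      nonZeroDivisors _ :=
  powers_le_nonZeroDivisors_of_noZeroDivisors (MvPolynomial.X_ne_zero _)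

instance : IsDomain (GenericCoeffRing k) :=
  IsLocalization.isDomain_localization (powers_X_last_le_nonZeroDivisors k)

lemma injective_algebraMap_genericCoeffRing :
    Function.Injective (algebraMap (MvPolynomial (Fin (k + 1)) ℚ) (GenericCoeffRing k)) :=
  IsLocalization.injective _ (powers_X_last_le_nonZeroDivisors k)

lemma isUnit_algebraMap_X_last :
    IsUnit (algebraMap (MvPolynomial (Fin (k + 1)) ℚ) (GenericCoeffRing k)
      (MvPolynomial.X (Fin.last k))) :=
  IsLocalization.Away.algebraMap_isUnit _

lemma natDegree_genericPoly : (genericPoly k).natDegree = k + 1 :=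
  natDegree_polyOfCoeffs (isUnit_algebraMap_X_last k).ne_zero

lemma isUnit_leadingCoeff_genericPoly : IsUnit (genericPoly k).leadingCoeff := by
  rw [genericPoly, leadingCoeff_polyOfCoeffs (isUnit_algebraMap_X_last k).ne_zero]
  exact isUnit_algebraMap_X_last k

variable {k} {S : Type*} [CommRing S] [Algebra ℚ S]

noncomputable def genericEval (b : Fin (k + 1) → S) (hb : IsUnit (b (Fin.last k))) :
    GenericCoeffRing k →+* S :=
  IsLocalization.Away.lift (MvPolynomial.X (Fin.last k))
    (g := (MvPolynomial.aeval (R := ℚ) b).toRingHom) (by simpa using hb)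

lemma genericEval_algebraMap (b : Fin (k + 1) → S) (hb : IsUnit (b (Fin.last k)))
    (p : MvPolynomial (Fin (k + 1)) ℚ) :
    genericEval b hb (algebraMap _ _ p) = MvPolynomial.aeval b p :=
  IsLocalization.Away.lift_eq (MvPolynomial.X (Fin.last k)) _ p

lemma map_genericPoly_genericEval (b : Fin (k + 1) → S) (hb : IsUnit (b (Fin.last k))) :
    (genericPoly k).map (genericEval b hb) = polyOfCoeffs b := by
  rw [genericPoly, polyOfCoeffs_map]
  congr 1
  ext i
  simp [genericEval_algebraMap]

lemma genericEval_injective {b : Fin (k + 1) → S} (hb : IsUnit (b (Fin.last k)))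
    (hind : AlgebraicIndependent ℚ b) : Function.Injective (genericEval b hb) :=
  (IsLocalization.lift_injective_iff _).2 fun _ _ =>
    ⟨fun h => congrArg _ (injective_algebraMap_genericCoeffRing k h),
      fun h => congrArg _ (hind h)⟩

end Generic

/-- Let `K` be a field of characteristic zero and `a₁, …, a_d ∈ K` (with `d ≥ 2`)
algebraically independent over `ℚ`.  Then `P(z) = a₁z + ⋯ + a_d z^d` has no parabolic
periodic point: no `z₀` with `P^n(z₀) = z₀` (`n ≥ 1`) whose multiplier `(P^n)'(z₀)` is
a root of unity. -/
theorem stmt17 {K : Type*} [Field K] [CharZero K] (d : ℕ) (hd : 2 ≤ d)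
    (a : Fin d → K) (ha : AlgebraicIndependent ℚ a) :
    ¬ ∃ (z₀ : K) (n : ℕ), 1 ≤ n ∧
      (polyIt (∑ i : Fin d, Polynomial.C (a i) * Polynomial.X ^ ((i : ℕ) + 1)) n).eval z₀ = z₀ ∧
      ∃ m : ℕ, 1 ≤ m ∧
        ((polyIt (∑ i : Fin d, Polynomial.C (a i) * Polynomial.X ^ ((i : ℕ) + 1)) n).derivative.eval
          z₀) ^ m = 1 := by
  obtain ⟨k, rfl⟩ : ∃ k, d = k + 1 := ⟨d - 1, by omega⟩
  rintro ⟨z₀, hz₀ : IsParabolicPeriodicPt (polyOfCoeffs a) z₀⟩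
  have ha₀ : IsUnit (a (Fin.last k)) := (ha.ne_zero _).isUnit
  let := (genericEval a ha₀).toAlgebra
  have hgen : IsParabolicPeriodicPt ((genericPoly k).map (algebraMap _ K)) z₀ := by
    rwa [RingHom.algebraMap_toAlgebra, map_genericPoly_genericEval]
  have hint : IsIntegral (GenericCoeffRing k) z₀ := by
    obtain ⟨n, hn, hfix, -⟩ := hgen
    exact isIntegral_of_eval_polyIt_eq_self (by rw [natDegree_genericPoly]; omega)
      (isUnit_leadingCoeff_genericPoly k) hn hfix
  let φ := genericEval (Pi.single (Fin.last k) (1 : ℚ)) (by simp)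
  obtain ⟨L, _, g, w, hw⟩ := exists_field_eval₂_eq_zero_of_isIntegral
    (genericEval_injective ha₀ ha) φ.toRatAlgHom hint
  have : CharZero L := charZero_of_injective_ringHom g.injective
  have hspec : (genericPoly k).map (g.comp φ) = X ^ (k + 1) := by
    rw [← Polynomial.map_map, map_genericPoly_genericEval, polyOfCoeffs_single, Fin.val_last,
      Polynomial.map_pow, map_X]
  exact not_isParabolicPeriodicPt_X_pow (by omega) w (hspec ▸ hgen.specialize hw)
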